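/- arXiv:1004.1359 — 2 statements merged into one kernel-verified Lean document; each statement's English description precedes it below -/
import Mathlib

section
/- Let R be a commutative ring, 𝔗 a torsion theory over R, 𝔞 a finitely generated ideal of R, and M an R-module. Then 𝔗-cgrade_R(𝔞,M) ≤ 𝔗-Kgrade_R(𝔞,M), i.e., the length of any weak M-regular sequence with respect to 𝔗 consisting of elements of 𝔞 is at most 𝔗-Kgrade_R(𝔞,M). -/
/-!
Induct on the length of a weak `M`-regular sequence `x₁, …, x_n` in `𝔞 = (y)`, passing from `M`
to `M ⧸ x₁M`; the regularity of `x₁` says that `0 :_M x₁ ∈ 𝔗`. Membership in `𝔗` is tested on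
cyclic submodules. Contracting homotopies show that `𝔞` kills `H^•(y; M)`, so a cocycle `φ` of
degree `m + 1` satisfies `x₁ φ = d ψ` (in degree `0`, `x₁ φ = 0`, so `φ` takes values in
`0 :_M x₁`). By induction the class of `ψ mod x₁M` in `H^m(y; M ⧸ x₁M)` generates a module
`R ⧸ J ∈ 𝔗`, and for `c ∈ J`, lifting `c ψ ≡ d ρ mod x₁M` shows that `c [φ]` is the class of a
cocycle with values in `0 :_M x₁`. So `R [φ]` is an extension of a quotient of `R ⧸ J` by a
module in `𝔗`.
-/

open CategoryTheory

universe u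

noncomputable section

/-- A torsion theory over `R`: a class of `R`-modules closed under isomorphism, submodules,
quotient modules, extensions, and directed colimits (formulated as closure under directed
unions of submodules). -/
structure IsTorsionTheory (R : Type u) [CommRing R] (T : Set (ModuleCat.{u} R)) : Prop where
  mem_of_iso : ∀ {N N' : ModuleCat.{u} R}, (N ≅ N') → N ∈ T → N' ∈ T
  submodule_mem : ∀ {N : ModuleCat.{u} R}, N ∈ T → ∀ S : Submodule R N,
    ModuleCat.of R S ∈ T
  quotient_mem : ∀ {N : ModuleCat.{u} R}, N ∈ T → ∀ S : Submodule R N,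
    ModuleCat.of R (N ⧸ S) ∈ T
  ext_mem : ∀ {N : ModuleCat.{u} R} (S : Submodule R N),
    ModuleCat.of R S ∈ T → ModuleCat.of R (N ⧸ S) ∈ T → N ∈ T
  directed_mem : ∀ {N : ModuleCat.{u} R} {ι : Type u} [Nonempty ι] (S : ι → Submodule R N),
    Directed (· ≤ ·) S → (∀ i, ModuleCat.of R (S i) ∈ T) → iSup S = ⊤ → N ∈ T

variable {R : Type u} [CommRing R]

/-- The "outgoing" differential of the Koszul cocomplex `Hom_R(K_•(x), M)`, whose degree `i`
component is indexed by the `i`-element subsets of `{1, …, r}`. -/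
def koszulDiff {r : ℕ} (x : Fin r → R) (M : Type u) [AddCommGroup M] [Module R M] (i : ℕ) :
    ({s : Finset (Fin r) // s.card = i} → M) →ₗ[R]
      ({s : Finset (Fin r) // s.card = i + 1} → M) where
  toFun φ t := ∑ j ∈ t.1.attach,
    ((-1 : R) ^ (t.1.filter (fun k => k < j.1)).card * x j.1) •
      φ ⟨t.1.erase j.1, by simp [Finset.card_erase_of_mem j.2, t.2]⟩
  map_add' φ ψ := by
    funext t
    simp [Finset.sum_add_distrib, smul_add]
  map_smul' c φ := by
    funext t
    simp [Finset.smul_sum, smul_comm c]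

/-- The "incoming" differential of the Koszul cocomplex in degree `i`
(its source is trivial when `i = 0`). -/
def koszulDiffIn {r : ℕ} (x : Fin r → R) (M : Type u) [AddCommGroup M] [Module R M] (i : ℕ) :
    ({s : Finset (Fin r) // s.card + 1 = i} → M) →ₗ[R]
      ({s : Finset (Fin r) // s.card = i} → M) where
  toFun φ t := ∑ j ∈ t.1.attach,
    ((-1 : R) ^ (t.1.filter (fun k => k < j.1)).card * x j.1) •
      φ ⟨t.1.erase j.1, by rw [Finset.card_erase_add_one j.2]; exact t.2⟩
  map_add' φ ψ := by
    funext t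
    simp [Finset.sum_add_distrib, smul_add]
  map_smul' c φ := by
    funext t
    simp [Finset.smul_sum, smul_comm c]

/-- The `i`-th Koszul cohomology `H^i(x; M)` of `M` with respect to `x₁, …, x_r`, i.e. the
`i`-th cohomology of the cocomplex `Hom_R(K_•(x), M)`. -/
abbrev koszulCohomology {r : ℕ} (x : Fin r → R) (M : Type u) [AddCommGroup M] [Module R M]
    (i : ℕ) : Type u :=
  ↥(LinearMap.ker (koszulDiff x M i)) ⧸
    (Submodule.comap (LinearMap.ker (koszulDiff x M i)).subtype
      (LinearMap.range (koszulDiffIn x M i)))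

/-- The `𝔗`-Koszul grade of the ideal `(x₁, …, x_r)` on `M`: the infimum of the set of `i`
such that `H^i(x; M) ∉ 𝔗` (with `inf ∅ = +∞`). -/
def TKgrade (T : Set (ModuleCat.{u} R)) {r : ℕ} (x : Fin r → R) (M : Type u)
    [AddCommGroup M] [Module R M] : ℕ∞ :=
  sInf ((↑· : ℕ → ℕ∞) '' {i | ModuleCat.of R (koszulCohomology x M i) ∉ T})

/-- `x₁, …, x_n` is a weak `M`-regular sequence with respect to `𝔗` if the module
`((x₁,…,x_{i-1})M :_M x_i) / (x₁,…,x_{i-1})M` belongs to `𝔗` for all `i = 1, …, n`. -/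
def IsWeakRegularSeqWrt (T : Set (ModuleCat.{u} R)) {n : ℕ} (x : Fin n → R) (M : Type u)
    [AddCommGroup M] [Module R M] : Prop :=
  ∀ i : Fin n,
    ModuleCat.of R
      ↥(Submodule.map (Ideal.span (x '' {j | j < i}) • (⊤ : Submodule R M)).mkQ
        (Submodule.comap (LinearMap.lsmul R M (x i))
          (Ideal.span (x '' {j | j < i}) • (⊤ : Submodule R M)))) ∈ T

/-- The `𝔗`-classical grade of `𝔞` on `M`: the supremum of the lengths of weak `M`-regular
sequences with respect to `𝔗` consisting of elements of `𝔞`. -/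
def Tcgrade (T : Set (ModuleCat.{u} R)) (a : Ideal R) (M : Type u)
    [AddCommGroup M] [Module R M] : ℕ∞ :=
  sSup ((↑· : ℕ → ℕ∞) ''
    {n | ∃ x : Fin n → R, (∀ i, x i ∈ a) ∧ IsWeakRegularSeqWrt T x M})


def IsTorsionElem (T : Set (ModuleCat.{u} R)) {N : Type u} [AddCommGroup N] [Module R N]
    (z : N) : Prop :=
  ModuleCat.of R (R ∙ z) ∈ T

namespace IsTorsionTheory

variable {T : Set (ModuleCat.{u} R)} (hT : IsTorsionTheory R T)
variable {N N' : Type u} [AddCommGroup N] [Module R N] [AddCommGroup N'] [Module R N']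
include hT

theorem mem_of_linearEquiv (e : N ≃ₗ[R] N') (h : ModuleCat.of R N ∈ T) :
    ModuleCat.of R N' ∈ T :=
  hT.mem_of_iso e.toModuleIso h

theorem mem_of_injective {f : N →ₗ[R] N'} (hf : Function.Injective f)
    (h : ModuleCat.of R N' ∈ T) : ModuleCat.of R N ∈ T :=
  hT.mem_of_linearEquiv (LinearEquiv.ofInjective f hf).symm (hT.submodule_mem h _)

theorem range_mem (f : N →ₗ[R] N') (h : ModuleCat.of R N ∈ T) :
    ModuleCat.of R (LinearMap.range f) ∈ T :=
  hT.mem_of_linearEquiv f.quotKerEquivRange (hT.quotient_mem h _)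

theorem map_mem (f : N →ₗ[R] N') {p : Submodule R N} (h : ModuleCat.of R p ∈ T) :
    ModuleCat.of R (p.map f) ∈ T := by
  rw [← p.range_subtype, ← LinearMap.range_comp]
  exact hT.range_mem _ h

theorem mem_of_ker_mem_of_range_mem (f : N →ₗ[R] N')
    (hker : ModuleCat.of R (LinearMap.ker f) ∈ T)
    (hrange : ModuleCat.of R (LinearMap.range f) ∈ T) : ModuleCat.of R N ∈ T :=
  hT.ext_mem (N := ModuleCat.of R N) (LinearMap.ker f) hker
    (hT.mem_of_linearEquiv f.quotKerEquivRange.symm hrange)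

theorem prod_mem (h : ModuleCat.of R N ∈ T) (h' : ModuleCat.of R N' ∈ T) :
    ModuleCat.of R (N × N') ∈ T := by
  refine hT.mem_of_ker_mem_of_range_mem (LinearMap.fst R N N') ?_ ?_
  · rw [LinearMap.ker_fst]
    exact hT.range_mem _ h'
  · rw [Submodule.range_fst]
    exact hT.mem_of_linearEquiv Submodule.topEquiv.symm h

theorem sup_mem {p q : Submodule R N} (hp : ModuleCat.of R p ∈ T) (hq : ModuleCat.of R q ∈ T) :
    ModuleCat.of R ↥(p ⊔ q) ∈ T := by
  rw [← p.range_subtype, ← q.range_subtype, ← LinearMap.range_coprod]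
  exact hT.range_mem _ (hT.prod_mem hp hq)

theorem pi_mem (h : ModuleCat.of R N ∈ T) (ι : Type) [Finite ι] :
    ModuleCat.of R (ι → N) ∈ T := by
  obtain ⟨k, ⟨e⟩⟩ := Finite.exists_equiv_fin ι
  refine hT.mem_of_linearEquiv (LinearEquiv.funCongrLeft R N e) ?_
  clear e
  induction k with
  | zero => exact hT.mem_of_injective (f := 0) (fun _ _ _ => Subsingleton.elim _ _) h
  | succ k ih =>
    exact hT.mem_of_linearEquiv (Fin.consLinearEquiv R fun _ => N) (hT.prod_mem h ih)

theorem range_mem_of_map_mem (g : N →ₗ[R] N') {p : Submodule R N}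
    (hp : ModuleCat.of R (p.map g) ∈ T) (hq : ModuleCat.of R (N ⧸ p) ∈ T) :
    ModuleCat.of R (LinearMap.range g) ∈ T := by
  set U := p.map g
  have hU : U ≤ LinearMap.range g := LinearMap.map_le_range
  refine hT.mem_of_ker_mem_of_range_mem (U.mkQ ∘ₗ (LinearMap.range g).subtype) ?_ ?_
  · rw [LinearMap.ker_comp, Submodule.ker_mkQ]
    exact hT.mem_of_linearEquiv (Submodule.comapSubtypeEquivOfLe hU).symm hp
  · have hker : p ≤ LinearMap.ker (U.mkQ ∘ₗ g) := fun z hz => by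
      simpa [U] using Submodule.mem_map_of_mem (f := g) hz
    rw [LinearMap.range_comp, Submodule.range_subtype, ← LinearMap.range_comp,
      ← p.range_liftQ _ hker]
    exact hT.range_mem _ hq

theorem ker_lsmul_mem_of_linearEquiv (e : N ≃ₗ[R] N') (c : R)
    (h : ModuleCat.of R (LinearMap.ker (LinearMap.lsmul R N c)) ∈ T) :
    ModuleCat.of R (LinearMap.ker (LinearMap.lsmul R N' c)) ∈ T := by
  refine hT.mem_of_linearEquiv (e.ofSubmodules _ _ ?_) h
  ext z
  simp [Submodule.mem_map_equiv, ← map_smul]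

theorem isTorsionElem_map (f : N →ₗ[R] N') {z : N} (h : IsTorsionElem T z) :
    IsTorsionElem T (f z) := by
  have := hT.map_mem f h
  rwa [Submodule.map_span, Set.image_singleton] at this

theorem isTorsionElem_of_injective {f : N →ₗ[R] N'} (hf : Function.Injective f) {z : N}
    (h : IsTorsionElem T (f z)) : IsTorsionElem T z := by
  refine hT.mem_of_linearEquiv (Submodule.equivMapOfInjective f hf (R ∙ z)).symm ?_
  rwa [Submodule.map_span, Set.image_singleton]

/-- `N` is the directed union of its finitely generated submodules. -/
theorem mem_iff_forall_isTorsionElem : ModuleCat.of R N ∈ T ↔ ∀ z : N, IsTorsionElem T z := by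
  classical
  refine ⟨fun h z => hT.submodule_mem (N := ModuleCat.of R N) h (R ∙ z), fun h => ?_⟩
  have hspan (s : Finset N) : ModuleCat.of R (Submodule.span R (s : Set N)) ∈ T := by
    induction s using Finset.induction_on with
    | empty =>
      rw [Finset.coe_empty, Submodule.span_empty, ← Submodule.span_zero_singleton]
      exact h 0
    | insert z s _ ih =>
      rw [Finset.coe_insert, Submodule.span_insert]
      exact hT.sup_mem (h z) ih
  refine hT.directed_mem (N := ModuleCat.of R N) (fun s : Finset N => Submodule.span R s)
    (fun s t => ⟨s ∪ t, Submodule.span_mono (by simp), Submodule.span_mono (by simp)⟩)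
    hspan ?_
  refine Submodule.eq_top_iff'.2 fun z => Submodule.mem_iSup_of_mem {z} ?_
  simp [Submodule.mem_span_singleton_self]

/-- `R ∙ z` is an extension of a quotient of `R ⧸ J` by `J • z`. -/
theorem isTorsionElem_of_ideal {J : Ideal R} (hJ : ModuleCat.of R (R ⧸ J) ∈ T) {z : N}
    (h : ∀ c ∈ J, IsTorsionElem T (c • z)) : IsTorsionElem T z := by
  rw [IsTorsionElem, LinearMap.span_singleton_eq_range]
  refine hT.range_mem_of_map_mem _ ?_ hJ
  rw [hT.mem_iff_forall_isTorsionElem]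
  rintro ⟨_, c, hc, rfl⟩
  exact hT.isTorsionElem_of_injective (Submodule.injective_subtype _) (h c hc)

end IsTorsionTheory

theorem Finset.sum_sum_erase_eq_zero_of_antisymm {ι M : Type*} [DecidableEq ι]
    [AddCommGroup M] {t : Finset ι} {f : ι → ι → M}
    (hf : ∀ j ∈ t, ∀ k ∈ t, j ≠ k → f k j = -f j k) :
    ∑ j ∈ t, ∑ k ∈ t.erase j, f j k = 0 := by
  rw [Finset.sum_sigma']
  refine Finset.sum_involution (fun p _ => ⟨p.2, p.1⟩) ?_ ?_ ?_ (fun _ _ => rfl)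
  · rintro ⟨j, k⟩ hp
    obtain ⟨hj, hkj, hk⟩ : j ∈ t ∧ k ≠ j ∧ k ∈ t := by simpa using hp
    simp [hf j hj k hk hkj.symm]
  · rintro ⟨j, k⟩ hp _ h
    obtain ⟨-, hkj, -⟩ : j ∈ t ∧ k ≠ j ∧ k ∈ t := by simpa using hp
    exact hkj (congrArg Sigma.fst h)
  · rintro ⟨j, k⟩ hp
    obtain ⟨hj, hkj, hk⟩ : j ∈ t ∧ k ≠ j ∧ k ∈ t := by simpa using hp
    simpa using ⟨hk, hkj.symm, hj⟩

namespace Koszul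

variable {r : ℕ}

def sign (t : Finset (Fin r)) (j : Fin r) : R :=
  (-1) ^ (t.filter (fun k => k < j)).card

theorem sign_insert {t : Finset (Fin r)} {k : Fin r} (hk : k ∉ t) (j : Fin r) :
    sign (insert k t) j = (if k < j then -1 else 1) * (sign t j : R) := by
  unfold sign
  rw [Finset.filter_insert]
  split_ifs
  · rw [Finset.card_insert_of_notMem (by simp [hk]), pow_succ]
    ring
  · ring

theorem sign_erase {t : Finset (Fin r)} {k : Fin r} (hk : k ∈ t) (j : Fin r) :
    sign t j = (if k < j then -1 else 1) * (sign (t.erase k) j : R) := by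
  conv_lhs => rw [← Finset.insert_erase hk]
  exact sign_insert (Finset.notMem_erase k t) j

theorem sign_mul_self (t : Finset (Fin r)) (j : Fin r) : sign t j * (sign t j : R) = 1 := by
  rw [sign, ← pow_add, ← two_mul, pow_mul, neg_one_sq, one_pow]

theorem sign_mul_sign_erase {t : Finset (Fin r)} {j k : Fin r} (hj : j ∈ t) (hk : k ∈ t)
    (hjk : j ≠ k) : sign t j * (sign (t.erase j) k : R) = -(sign t k * sign (t.erase k) j) := by
  rw [sign_erase hk j, sign_erase hj k]
  rcases lt_or_gt_of_ne hjk with h | h <;> simp [h, lt_asymm h] <;> ring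

theorem sign_mul_sign_insert {t : Finset (Fin r)} {j k : Fin r} (hj : j ∉ t) (hk : k ∈ t) :
    sign t k * (sign (t.erase k) j : R) = -(sign t j * sign (insert j t) k) := by
  have hjk : j ≠ k := fun h => hj (h ▸ hk)
  rw [sign_insert hj k, sign_erase hk j]
  rcases lt_or_gt_of_ne hjk with h | h <;> simp [h, lt_asymm h] <;> ring

variable {M : Type*} [AddCommGroup M] [Module R M]

/-- The Koszul differential on cochains indexed by all subsets of `Fin r` at once; `koszulDiff`
and `koszulDiffIn` are its restrictions to subsets of fixed cardinality. -/
def diff (x : Fin r → R) : (Finset (Fin r) → M) →ₗ[R] (Finset (Fin r) → M) where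
  toFun G t := ∑ j ∈ t, (sign t j * x j) • G (t.erase j)
  map_add' G G' := by
    funext t
    simp [Finset.sum_add_distrib]
  map_smul' c G := by
    funext t
    simp [Finset.smul_sum, smul_comm c]

theorem diff_apply (x : Fin r → R) (G : Finset (Fin r) → M) (t : Finset (Fin r)) :
    diff x G t = ∑ j ∈ t, (sign t j * x j) • G (t.erase j) :=
  rfl

theorem diff_diff (x : Fin r → R) (G : Finset (Fin r) → M) : diff x (diff x G) = 0 := by
  funext t
  simp only [diff_apply, Finset.smul_sum, smul_smul, Pi.zero_apply]
  refine Finset.sum_sum_erase_eq_zero_of_antisymm fun j hj k hk hjk => ?_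
  rw [Finset.erase_right_comm, ← neg_smul]
  congr 1
  linear_combination (x j * x k) * sign_mul_sign_erase (R := R) hk hj hjk.symm

variable (R) in
def contract (j : Fin r) : (Finset (Fin r) → M) →ₗ[R] (Finset (Fin r) → M) where
  toFun G s := if j ∈ s then 0 else (sign s j : R) • G (insert j s)
  map_add' G G' := by
    funext s
    split_ifs <;> simp [*]
  map_smul' c G := by
    funext s
    split_ifs <;> simp [*, smul_comm c]

theorem contract_apply (j : Fin r) (G : Finset (Fin r) → M) (s : Finset (Fin r)) :
    contract R j G s = if j ∈ s then 0 else (sign s j : R) • G (insert j s) :=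
  rfl

theorem diff_contract_add_contract_diff (x : Fin r → R) (j : Fin r) (G : Finset (Fin r) → M) :
    diff x (contract R j G) + contract R j (diff x G) = x j • G := by
  funext t
  have hsq := sign_mul_self (R := R) t j
  by_cases hj : j ∈ t
  · rw [Pi.add_apply, contract_apply, if_pos hj, add_zero, diff_apply,
      Finset.sum_eq_single_of_mem j hj fun k hk hkj => by
        rw [contract_apply, if_pos (Finset.mem_erase.2 ⟨hkj.symm, hj⟩), smul_zero],
      contract_apply, if_neg (Finset.notMem_erase j t), Finset.insert_erase hj, smul_smul]
    have hjj : sign t j = (sign (t.erase j) j : R) := by simpa using sign_erase (R := R) hj j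
    rw [← hjj, Pi.smul_apply]
    congr 1
    linear_combination x j * hsq
  · rw [Pi.add_apply, contract_apply, if_neg hj, diff_apply, diff_apply, Finset.sum_insert hj,
      Finset.erase_insert hj, sign_insert hj j, smul_add, Finset.smul_sum, Pi.smul_apply]
    simp only [lt_irrefl, if_false, one_mul, smul_smul]
    rw [add_left_comm, ← Finset.sum_add_distrib, Finset.sum_eq_zero, add_zero]
    · congr 1
      linear_combination x j * hsq
    intro k hk
    have hkj : j ≠ k := fun h => hj (h ▸ hk)
    rw [contract_apply, if_neg fun h => hj (Finset.mem_of_mem_erase h),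
      Finset.erase_insert_of_ne hkj, smul_smul, ← add_smul]
    convert zero_smul R _
    linear_combination x k * sign_mul_sign_insert (R := R) hj hk

end Koszul

section KoszulCochains

variable {r : ℕ} (x : Fin r → R) {M M' : Type u} [AddCommGroup M] [Module R M]
  [AddCommGroup M'] [Module R M']

theorem koszulDiff_comp_val (i : ℕ) (G : Finset (Fin r) → M) :
    koszulDiff x M i (G ∘ Subtype.val) = Koszul.diff x G ∘ Subtype.val := by
  funext t
  exact Finset.sum_attach t.1 fun j => (Koszul.sign t.1 j * x j) • G (t.1.erase j)

theorem koszulDiffIn_comp_val (i : ℕ) (G : Finset (Fin r) → M) :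
    koszulDiffIn x M i (G ∘ Subtype.val) = Koszul.diff x G ∘ Subtype.val := by
  funext t
  exact Finset.sum_attach t.1 fun j => (Koszul.sign t.1 j * x j) • G (t.1.erase j)

theorem koszulDiff_koszulDiff {i : ℕ} (φ : {s : Finset (Fin r) // s.card = i} → M) :
    koszulDiff x M (i + 1) (koszulDiff x M i φ) = 0 := by
  obtain ⟨G, rfl⟩ := Subtype.val_injective.surjective_comp_right φ
  rw [koszulDiff_comp_val, koszulDiff_comp_val, Koszul.diff_diff]
  rfl

theorem koszulDiff_koszulDiffIn {i : ℕ} (ρ : {s : Finset (Fin r) // s.card + 1 = i} → M) :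
    koszulDiff x M i (koszulDiffIn x M i ρ) = 0 := by
  obtain ⟨G, rfl⟩ := Subtype.val_injective.surjective_comp_right ρ
  rw [koszulDiffIn_comp_val, koszulDiff_comp_val, Koszul.diff_diff]
  rfl

theorem koszulDiffIn_zero : koszulDiffIn x M 0 = 0 := by
  refine LinearMap.ext fun φ => funext fun t => Finset.sum_eq_zero fun j _ => ?_
  exact absurd j.2 (by simp [Finset.card_eq_zero.1 t.2])

theorem range_koszulDiffIn_succ (i : ℕ) :
    LinearMap.range (koszulDiffIn x M (i + 1)) = LinearMap.range (koszulDiff x M i) := by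
  have key (G : Finset (Fin r) → M) :
      koszulDiffIn x M (i + 1) (G ∘ Subtype.val) = koszulDiff x M i (G ∘ Subtype.val) := by
    rw [koszulDiffIn_comp_val, koszulDiff_comp_val]
  ext φ
  constructor
  · rintro ⟨ρ, rfl⟩
    obtain ⟨G, rfl⟩ := Subtype.val_injective.surjective_comp_right ρ
    exact ⟨G ∘ Subtype.val, (key G).symm⟩
  · rintro ⟨σ, rfl⟩
    obtain ⟨G, rfl⟩ := Subtype.val_injective.surjective_comp_right σ
    exact ⟨G ∘ Subtype.val, key G⟩

theorem koszulDiff_linearMap_comp (f : M →ₗ[R] M') {i : ℕ}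
    (φ : {s : Finset (Fin r) // s.card = i} → M) :
    koszulDiff x M' i (f ∘ φ) = f ∘ koszulDiff x M i φ := by
  funext t
  simp [koszulDiff]

theorem koszulDiffIn_linearMap_comp (f : M →ₗ[R] M') {i : ℕ}
    (ρ : {s : Finset (Fin r) // s.card + 1 = i} → M) :
    koszulDiffIn x M' i (f ∘ ρ) = f ∘ koszulDiffIn x M i ρ := by
  funext t
  simp [koszulDiffIn]

/-- The cochain-level form of `(x₁, …, x_r) · H^•(x; M) = 0`, using the homotopies
`Koszul.contract`. -/
theorem smul_mem_range_koszulDiffIn {i : ℕ} {φ : {s : Finset (Fin r) // s.card = i} → M}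
    (hφ : koszulDiff x M i φ = 0) {a : R} (ha : a ∈ Ideal.span (Set.range x)) :
    a • φ ∈ LinearMap.range (koszulDiffIn x M i) := by
  suffices Ideal.span (Set.range x) ≤ (LinearMap.range (koszulDiffIn x M i)).colon {φ} from
    Submodule.mem_colon_singleton.1 (this ha)
  refine Ideal.span_le.2 (Set.range_subset_iff.2 fun j => Submodule.mem_colon_singleton.2 ?_)
  obtain ⟨G, rfl⟩ := Subtype.val_injective.surjective_comp_right φ
  refine ⟨Koszul.contract R j G ∘ Subtype.val, ?_⟩
  have hdG : ∀ t : Finset (Fin r), t.card = i + 1 → Koszul.diff x G t = 0 := fun t ht => by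
    rw [koszulDiff_comp_val] at hφ
    exact congrFun hφ ⟨t, ht⟩
  have hcontract (s : {s : Finset (Fin r) // s.card = i}) :
      Koszul.contract R j (Koszul.diff x G) s.1 = 0 := by
    rw [Koszul.contract_apply]
    split_ifs with hj
    · rfl
    · rw [hdG _ (by rw [Finset.card_insert_of_notMem hj, s.2]), smul_zero]
  funext s
  rw [koszulDiffIn_comp_val]
  simpa [hcontract s] using congrFun (Koszul.diff_contract_add_contract_diff x j G) s.1

end KoszulCochains

theorem Submodule.map_mkQ_comap_lsmul {M : Type*} [AddCommGroup M] [Module R M]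
    (N : Submodule R M) (c : R) :
    (N.comap (LinearMap.lsmul R M c)).map N.mkQ =
      LinearMap.ker (LinearMap.lsmul R (M ⧸ N) c) := by
  rw [← Submodule.map_comap_eq_of_surjective N.mkQ_surjective (LinearMap.ker _)]
  congr 1
  ext m
  simp [← Submodule.Quotient.mk_smul]

theorem Fin.image_lt_succ {α : Type*} {n : ℕ} (x : Fin (n + 1) → α) (i : Fin n) :
    x '' {j | j < i.succ} = insert (x 0) (Fin.tail x '' {j | j < i}) := by
  ext a
  constructor
  · rintro ⟨j, hj, rfl⟩
    cases j using Fin.cases with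
    | zero => exact Set.mem_insert _ _
    | succ j => exact Set.mem_insert_of_mem _ ⟨j, Fin.succ_lt_succ_iff.1 hj, rfl⟩
  · rintro (rfl | ⟨j, hj, rfl⟩)
    · exact ⟨0, Fin.succ_pos i, rfl⟩
    · exact ⟨j.succ, Fin.succ_lt_succ_iff.2 hj, rfl⟩

namespace IsWeakRegularSeqWrt

open Pointwise

variable {T : Set (ModuleCat.{u} R)} {M : Type u} [AddCommGroup M] [Module R M]

theorem iff_ker_lsmul {n : ℕ} {x : Fin n → R} :
    IsWeakRegularSeqWrt T x M ↔ ∀ i : Fin n, ModuleCat.of R (LinearMap.ker (LinearMap.lsmul R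
      (M ⧸ Ideal.span (x '' {j | j < i}) • (⊤ : Submodule R M)) (x i))) ∈ T := by
  refine forall_congr' fun i => ?_
  rw [Submodule.map_mkQ_comap_lsmul]

variable (hT : IsTorsionTheory R T) {n : ℕ} {x : Fin (n + 1) → R}
include hT

theorem ker_lsmul_mem (hreg : IsWeakRegularSeqWrt T x M) :
    ModuleCat.of R (LinearMap.ker (LinearMap.lsmul R M (x 0))) ∈ T := by
  refine hT.ker_lsmul_mem_of_linearEquiv (Submodule.quotEquivOfEqBot _ ?_) _
    (iff_ker_lsmul.1 hreg 0)
  simp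

theorem tail (hreg : IsWeakRegularSeqWrt T x M) :
    IsWeakRegularSeqWrt T (Fin.tail x) (QuotSMulTop (x 0) M) := by
  refine iff_ker_lsmul.2 fun i =>
    hT.ker_lsmul_mem_of_linearEquiv ?_ _ (iff_ker_lsmul.1 hreg i.succ)
  set I := Ideal.span (Fin.tail x '' {j | j < i})
  have hsup : Ideal.span (x '' {j | j < i.succ}) • (⊤ : Submodule R M) =
      x 0 • (⊤ : Submodule R M) ⊔ I • ⊤ := by
    rw [Fin.image_lt_succ, Ideal.span_insert, Submodule.sup_smul,
      Submodule.ideal_span_singleton_smul]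
  exact Submodule.quotEquivOfEq _ _ hsup ≪≫ₗ
    (Submodule.quotientQuotientEquivQuotientSup (x 0 • ⊤) (I • ⊤)).symm ≪≫ₗ
    Submodule.quotEquivOfEq _ _ (by
      rw [Submodule.map_smul'', Submodule.map_top, Submodule.range_mkQ])

end IsWeakRegularSeqWrt

namespace IsTorsionTheory

open Pointwise

variable {T : Set (ModuleCat.{u} R)} (hT : IsTorsionTheory R T) {r : ℕ} (y : Fin r → R)
  {M : Type u} [AddCommGroup M] [Module R M] {a : R}
include hT

section Annihilator

variable (hK : ModuleCat.of R (LinearMap.ker (LinearMap.lsmul R M a)) ∈ T)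
include hK

theorem isTorsionElem_mk_of_smul_eq_zero {i : ℕ} (φ : LinearMap.ker (koszulDiff y M i))
    (hφ : a • (φ : {s : Finset (Fin r) // s.card = i} → M) = 0) :
    IsTorsionElem T (Submodule.Quotient.mk φ : koszulCohomology y M i) := by
  set K := LinearMap.ker (LinearMap.lsmul R M a)
  have hφK (t) : φ.1 t ∈ K := congrFun hφ t
  let φK : {s : Finset (Fin r) // s.card = i} → K := fun t => ⟨φ.1 t, hφK t⟩
  have h1 : IsTorsionElem T φK := hT.mem_iff_forall_isTorsionElem.1 (hT.pi_mem hK _) φK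
  have h2 := hT.isTorsionElem_map (LinearMap.compLeft K.subtype _) h1
  have h3 : IsTorsionElem T φ :=
    hT.isTorsionElem_of_injective (f := (LinearMap.ker (koszulDiff y M i)).subtype)
      (Submodule.injective_subtype _) h2
  exact hT.isTorsionElem_map (Submodule.mkQ _) h3

theorem koszulCohomology_zero_mem (ha : a ∈ Ideal.span (Set.range y)) :
    ModuleCat.of R (koszulCohomology y M 0) ∈ T := by
  refine hT.mem_iff_forall_isTorsionElem.2 fun z => ?_
  obtain ⟨φ, rfl⟩ := Submodule.Quotient.mk_surjective _ z
  refine hT.isTorsionElem_mk_of_smul_eq_zero y hK φ ?_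
  simpa [koszulDiffIn_zero] using smul_mem_range_koszulDiffIn y (LinearMap.mem_ker.1 φ.2) ha

/-- `c • [φ]` is the class of a cocycle with values in `0 :_M a`. -/
theorem isTorsionElem_smul_mk_of_lift {m : ℕ} (φ : LinearMap.ker (koszulDiff y M (m + 1)))
    (ψ : {s : Finset (Fin r) // s.card = m} → M) (hψ : koszulDiff y M m ψ = a • φ) {c : R}
    (hc : c • ((a • ⊤ : Submodule R M).mkQ ∘ ψ) ∈
      LinearMap.range (koszulDiffIn y (QuotSMulTop a M) m)) :
    IsTorsionElem T (c • Submodule.Quotient.mk φ : koszulCohomology y M (m + 1)) := by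
  set π := (a • ⊤ : Submodule R M).mkQ
  obtain ⟨ρ', hρ'⟩ := hc
  obtain ⟨ρ, rfl⟩ := Function.Surjective.comp_left (Submodule.mkQ_surjective _) ρ'
  have hmem (t) : (c • ψ - koszulDiffIn y M m ρ) t ∈ a • (⊤ : Submodule R M) := by
    have := congrFun hρ' t
    rw [koszulDiffIn_linearMap_comp] at this
    rw [← Submodule.Quotient.mk_eq_zero]
    simpa [sub_eq_zero, π] using this.symm
  choose σ hσ using fun t => (Submodule.mem_smul_pointwise_iff_exists _ a _).1 (hmem t)
  have hσ' : a • σ = c • ψ - koszulDiffIn y M m ρ := funext fun t => (hσ t).2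
  set κ := c • (φ : {s : Finset (Fin r) // s.card = m + 1} → M) - koszulDiff y M m σ
  have hκ : koszulDiff y M (m + 1) κ = 0 := by
    simp [κ, LinearMap.mem_ker.1 φ.2, koszulDiff_koszulDiff]
  have hκa : a • κ = 0 := by
    rw [smul_sub, smul_comm, ← map_smul, hσ', ← hψ, map_sub, map_smul,
      koszulDiff_koszulDiffIn, sub_zero, sub_self]
  have hclass : (c • Submodule.Quotient.mk φ : koszulCohomology y M (m + 1)) =
      Submodule.Quotient.mk ⟨κ, hκ⟩ := by
    rw [← Submodule.Quotient.mk_smul, Submodule.Quotient.eq, Submodule.mem_comap,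
      range_koszulDiffIn_succ]
    exact ⟨σ, by simp [κ]⟩
  rw [hclass]
  exact hT.isTorsionElem_mk_of_smul_eq_zero y hK _ hκa

theorem koszulCohomology_succ_mem (ha : a ∈ Ideal.span (Set.range y)) {m : ℕ}
    (hQ : ModuleCat.of R (koszulCohomology y (QuotSMulTop a M) m) ∈ T) :
    ModuleCat.of R (koszulCohomology y M (m + 1)) ∈ T := by
  refine hT.mem_iff_forall_isTorsionElem.2 fun z => ?_
  obtain ⟨φ, rfl⟩ := Submodule.Quotient.mk_surjective _ z
  obtain ⟨ψ, hψ⟩ : a • (φ : _ → M) ∈ LinearMap.range (koszulDiff y M m) := by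
    rw [← range_koszulDiffIn_succ]
    exact smul_mem_range_koszulDiffIn y (LinearMap.mem_ker.1 φ.2) ha
  set π := (a • ⊤ : Submodule R M).mkQ
  have hψπ : koszulDiff y (QuotSMulTop a M) m (π ∘ ψ) = 0 := by
    rw [koszulDiff_linearMap_comp, hψ]
    funext t
    exact (Submodule.Quotient.mk_eq_zero _).2 (Submodule.smul_mem_pointwise_smul _ a _ trivial)
  set zQ : koszulCohomology y (QuotSMulTop a M) m := Submodule.Quotient.mk ⟨π ∘ ψ, hψπ⟩
  refine hT.isTorsionElem_of_ideal (J := Ideal.torsionOf R _ zQ) ?_ fun c hc => ?_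
  · exact hT.mem_of_linearEquiv (Ideal.quotTorsionOfEquivSpanSingleton R _ zQ).symm
      (hT.mem_iff_forall_isTorsionElem.1 hQ zQ)
  · refine hT.isTorsionElem_smul_mk_of_lift y hK φ ψ hψ ?_
    rwa [Ideal.mem_torsionOf_iff, ← Submodule.Quotient.mk_smul,
      Submodule.Quotient.mk_eq_zero] at hc

end Annihilator

theorem koszulCohomology_mem_of_isWeakRegularSeqWrt {n : ℕ} {x : Fin n → R}
    (hx : ∀ j, x j ∈ Ideal.span (Set.range y)) (hreg : IsWeakRegularSeqWrt T x M) {i : ℕ}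
    (hi : i < n) : ModuleCat.of R (koszulCohomology y M i) ∈ T := by
  induction n generalizing M i with
  | zero => exact absurd hi (Nat.not_lt_zero i)
  | succ n ih =>
    have hK := hreg.ker_lsmul_mem hT
    cases i with
    | zero => exact hT.koszulCohomology_zero_mem y hK (hx 0)
    | succ m =>
      exact hT.koszulCohomology_succ_mem y hK (hx 0)
        (ih (fun j => hx j.succ) (hreg.tail hT) (Nat.lt_of_succ_lt_succ hi))

end IsTorsionTheory

/-- **Theorem (classical grade ≤ Koszul grade).** Let `𝔗` be a torsion theory, `𝔞` a
finitely generated ideal of `R` (generated by `y₁, …, y_r`) and `M` an `R`-module. Then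
`𝔗-cgrade_R(𝔞, M) ≤ 𝔗-Kgrade_R(𝔞, M)`: the length of any weak `M`-regular sequence with
respect to `𝔗` consisting of elements of `𝔞` is at most `𝔗-Kgrade_R(𝔞, M)`. -/
theorem tcgrade_le_tKgrade (T : Set (ModuleCat.{u} R)) (hT : IsTorsionTheory R T)
    (a : Ideal R) (M : Type u) [AddCommGroup M] [Module R M]
    {r : ℕ} (y : Fin r → R) (hy : Ideal.span (Set.range y) = a) :
    Tcgrade T a M ≤ TKgrade T y M := by
  refine sSup_le ?_
  rintro _ ⟨n, ⟨x, hxa, hreg⟩, rfl⟩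
  refine le_sInf ?_
  rintro _ ⟨i, hi, rfl⟩
  by_contra! hlt
  exact hi (hT.koszulCohomology_mem_of_isWeakRegularSeqWrt y (fun j => hy ▸ hxa j) hreg
    (by exact_mod_cast hlt))
end
end

section
/- Let R be a commutative ring, 𝔗 a torsion theory over R, 𝔞 a finitely generated ideal of R, and M an R-module with M ∈ 𝔗. Then Ext¹_R(R/𝔞, M) ∈ 𝔗. -/
open CategoryTheory

universe u

noncomputable section

variable {R : Type u} [CommRing R]

/-!
If `𝔞` is generated by `v₁, …, vₙ`, the presentation `Rⁿ ⟶ R ⟶ R ⧸ 𝔞 ⟶ 0` extends by syzygies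
to a projective resolution of `R ⧸ 𝔞` whose degree-one term is `Rⁿ`. Computing `Ext¹` with it
exhibits `Ext¹(R ⧸ 𝔞, M)` as a subquotient of `Hom(Rⁿ, M) ≅ Mⁿ`, and `Mⁿ` lies in `𝔗` since
`𝔗` is closed under extensions.
-/

namespace CategoryTheory.ProjectiveResolution

open Limits Projective

variable {C : Type*} [Category C] [Abelian C] [EnoughProjectives C]

def syzygiesStep {X₀ X₁ : C} (f : X₁ ⟶ X₀) :
    Σ' X₂ : C, Σ' d : X₂ ⟶ X₁, d ≫ f = 0 :=
  ⟨_, Projective.d f, (Category.assoc _ _ _).trans (by rw [kernel.condition]; exact comp_zero)⟩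

/-- `d₁` continued to the left by syzygies. -/
def ofPresentationComplex {P₀ P₁ : C} (d₁ : P₁ ⟶ P₀) : ChainComplex C ℕ :=
  ChainComplex.mk' P₀ P₁ d₁ syzygiesStep

lemma ofPresentationComplex_d_1_0 {P₀ P₁ : C} (d₁ : P₁ ⟶ P₀) :
    (ofPresentationComplex d₁).d 1 0 = d₁ :=
  ChainComplex.mk'_d_1_0 _ _ _ _

lemma ofPresentationComplex_exactAt_succ {P₀ P₁ : C} (d₁ : P₁ ⟶ P₀) (n : ℕ) :
    (ofPresentationComplex d₁).ExactAt (n + 1) := by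
  rw [HomologicalComplex.exactAt_iff' _ (n + 1 + 1) (n + 1) n (by simp) (by simp)]
  refine (ShortComplex.exact_iff_of_iso ?_).2
    (exact_d_f ((ofPresentationComplex d₁).d (n + 1) n))
  refine ShortComplex.isoMk (ChainComplex.mk'XIso P₀ P₁ d₁ syzygiesStep n)
    (Iso.refl _) (Iso.refl _) ?_ ?_
  · exact (ChainComplex.mk'_d _ _ _ _ n).symm.trans (Category.comp_id _).symm
  · exact (Category.id_comp _).trans (Category.comp_id _).symm

instance {P₀ P₁ : C} [Projective P₀] [Projective P₁] (d₁ : P₁ ⟶ P₀) (n : ℕ) :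
    Projective ((ofPresentationComplex d₁).X n) := by
  obtain (_ | _ | _ | n) := n
  · exact ‹Projective P₀›
  · exact ‹Projective P₁›
  all_goals apply Projective.projective_over

def ofPresentation {Z P₀ P₁ : C} [Projective P₀] [Projective P₁] (π : P₀ ⟶ Z) [Epi π]
    (d₁ : P₁ ⟶ P₀) (w : d₁ ≫ π = 0) (hex : (ShortComplex.mk d₁ π w).Exact) :
    ProjectiveResolution Z where
  complex := ofPresentationComplex d₁
  π := (ChainComplex.toSingle₀Equiv _ _).symm
    ⟨π, by rw [ofPresentationComplex_d_1_0]; exact w⟩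
  quasiIso := ⟨fun n => by
    cases n with
    | zero =>
      rw [ChainComplex.quasiIsoAt₀_iff, ShortComplex.quasiIso_iff_of_zeros']
      · refine (ShortComplex.exact_and_epi_g_iff_of_iso ?_).2 ⟨hex, by dsimp; infer_instance⟩
        refine ShortComplex.isoMk (Iso.refl _) (Iso.refl _) (Iso.refl _) ?_ ?_
        · exact (Category.id_comp _).trans
            ((ofPresentationComplex_d_1_0 d₁).symm.trans (Category.comp_id _).symm)
        · simp only [Iso.refl_hom, HomologicalComplex.shortComplexFunctor'_map_τ₂]
          erw [ChainComplex.toSingle₀Equiv_symm_apply_f_zero]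
          exact (Category.id_comp _).trans (Category.comp_id _).symm
      all_goals rfl
    | succ n =>
      rw [quasiIsoAt_iff_exactAt']
      · exact ofPresentationComplex_exactAt_succ d₁ n
      · exact ChainComplex.exactAt_succ_single_obj _ _⟩

end CategoryTheory.ProjectiveResolution

namespace Ideal

variable {n : ℕ} (v : Fin n → R)

lemma mkQ_comp_linearCombination :
    (span (Set.range v)).mkQ ∘ₗ Fintype.linearCombination R v = 0 := by
  rw [← LinearMap.range_le_ker_iff, Submodule.ker_mkQ, Fintype.range_linearCombination]

lemma exact_linearCombination_mkQ :
    (ShortComplex.mk (ModuleCat.ofHom (Fintype.linearCombination R v))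
      (ModuleCat.ofHom (span (Set.range v)).mkQ)
      (ModuleCat.hom_ext (mkQ_comp_linearCombination v))).Exact := by
  rw [ShortComplex.moduleCat_exact_iff_range_eq_ker]
  exact (Fintype.range_linearCombination R v).trans (Submodule.ker_mkQ _).symm

def quotientSpanResolution :
    ProjectiveResolution (ModuleCat.of R (R ⧸ span (Set.range v))) :=
  haveI : Epi (ModuleCat.ofHom (span (Set.range v)).mkQ) :=
    (ModuleCat.epi_iff_surjective _).2 (Submodule.mkQ_surjective _)
  ProjectiveResolution.ofPresentation _ _ _ (exact_linearCombination_mkQ v)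

end Ideal

namespace IsTorsionTheory

variable {T : Set (ModuleCat.{u} R)} (hT : IsTorsionTheory R T)
include hT

lemma homology_mem (S : ShortComplex (ModuleCat.{u} R)) (h : S.X₂ ∈ T) : S.homology ∈ T :=
  hT.mem_of_iso S.moduleCatHomologyIso.symm <|
    hT.quotient_mem (hT.submodule_mem h (LinearMap.ker S.g.hom)) _

lemma prod_mem_s10 {A B : Type u} [AddCommGroup A] [Module R A] [AddCommGroup B] [Module R B]
    (hA : ModuleCat.of R A ∈ T) (hB : ModuleCat.of R B ∈ T) :
    ModuleCat.of R (A × B) ∈ T := by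
  refine hT.ext_mem (N := ModuleCat.of R (A × B)) (Submodule.fst R A B) ?_ ?_
  · exact hT.mem_of_iso (Submodule.fstEquiv R A B).symm.toModuleIso hA
  · exact hT.mem_of_iso
      (LinearMap.quotKerEquivOfSurjective _ LinearMap.snd_surjective).symm.toModuleIso hB

lemma pi_mem_s10 {M : Type u} [AddCommGroup M] [Module R M] (hM : ModuleCat.of R M ∈ T) :
    ∀ n : ℕ, ModuleCat.of R (Fin n → M) ∈ T
  | 0 => hT.mem_of_iso (LinearEquiv.ofSubsingleton _ _).toModuleIso (hT.submodule_mem hM ⊥)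
  | n + 1 => hT.mem_of_iso (Fin.consLinearEquiv R fun _ ↦ M).toModuleIso
      (hT.prod_mem_s10 hM (pi_mem_s10 hM n))

lemma hom_pi_mem {M : Type u} [AddCommGroup M] [Module R M] (hM : ModuleCat.of R M ∈ T)
    (n : ℕ) :
    ModuleCat.of R (ModuleCat.of R (Fin n → R) ⟶ ModuleCat.of R M) ∈ T :=
  hT.mem_of_iso ((Pi.basisFun R (Fin n)).constr R ≪≫ₗ (ModuleCat.homLinearEquiv (S := R)
    (M := ModuleCat.of R (Fin n → R)) (N := ModuleCat.of R M)).symm).toModuleIso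
    (hT.pi_mem_s10 hM n)

lemma ext_mem_of_hom_mem {X Y : ModuleCat.{u} R} (P : ProjectiveResolution X) (n : ℕ)
    (h : ModuleCat.of R (P.complex.X n ⟶ Y) ∈ T) :
    ((Ext R (ModuleCat.{u} R) n).obj (Opposite.op X)).obj Y ∈ T :=
  hT.mem_of_iso (P.isoExt n Y).symm (hT.homology_mem _ h)

end IsTorsionTheory

/-- **Theorem.** Let `𝔗` be a torsion theory, `𝔞` a finitely generated ideal of `R` and
`M ∈ 𝔗`. Then `Ext¹_R(R/𝔞, M) ∈ 𝔗`. -/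
theorem ext_one_mem_of_mem (T : Set (ModuleCat.{u} R)) (hT : IsTorsionTheory R T)
    (a : Ideal R) (ha : a.FG) (M : Type u) [AddCommGroup M] [Module R M]
    (hM : ModuleCat.of R M ∈ T) :
    ((Ext R (ModuleCat.{u} R) 1).obj (Opposite.op (ModuleCat.of R (R ⧸ a)))).obj
      (ModuleCat.of R M) ∈ T := by
  obtain ⟨n, v, rfl⟩ := Submodule.fg_iff_exists_fin_generating_family.1 ha
  refine hT.ext_mem_of_hom_mem (Ideal.quotientSpanResolution v) 1 ?_
  exact hT.hom_pi_mem hM n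
end
end
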